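/- (Safety) If ⊢ c : A ! Δ is derivable for a closed core Eff computation c and c ⇝* r for some result r (i.e., c evaluates in finitely many small steps to a result), then either r = val e with ⊢ e : A, or r = ι#op e (x.c') with ι#op ∈ Δ. -/

import Mathlib

namespace CoreEff

/-- Names for effects, instances and operation symbols. -/
structure Sig where
  Effect : Type
  Inst : Type
  Op : Type

/- Pure types and dirty types of core Eff.  A region is a finite set of
instances, a dirt a finite set of operations `ι#op`. -/
mutual
inductive PType (σ : Sig) : Type
  | bool : PType σ
  | nat : PType σ
  | unit : PType σ
  | empty : PType σ
  | fn : PType σ → DType σ → PType σ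
  | eff : σ.Effect → Finset σ.Inst → PType σ
  | hand : DType σ → DType σ → PType σ
inductive DType (σ : Sig) : Type
  | bang : PType σ → Finset (σ.Inst × σ.Op) → DType σ
end

/-- Assignment of effects to instances and operation symbols, and of
parameter/result types to operation symbols (the signatures `Σ_E`). -/
structure OpSig (σ : Sig) where
  instOf : σ.Inst → σ.Effect
  opOf : σ.Op → σ.Effect
  par : σ.Op → PType σ
  res : σ.Op → PType σ

/- Syntax of core Eff, with de Bruijn indices.
In an operation case `e#op x k ↦ c`, the body `c` binds `x` as index 1 and
`k` as index 0.  In `letrec f x = c₁ in c₂`, `c₁` binds `f` as 1 and `x` as 0,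
and `c₂` binds `f` as 0. -/
mutual
inductive Expr (σ : Sig) : Type
  | var : Nat → Expr σ
  | tt : Expr σ
  | ff : Expr σ
  | zero : Expr σ
  | succ : Expr σ → Expr σ
  | unit : Expr σ
  | fn : PType σ → Comp σ → Expr σ
  | inst : σ.Inst → Expr σ
  | handler : PType σ → Comp σ → OpCases σ → Expr σ
inductive OpCases (σ : Sig) : Type
  | nil : DType σ → OpCases σ
  | cons : Expr σ → σ.Op → Comp σ → OpCases σ → OpCases σ
inductive Comp (σ : Sig) : Type
  | ret : Expr σ → Comp σ
  | call : Expr σ → σ.Op → Expr σ → Comp σ → Comp σ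
  | handle : Expr σ → Comp σ → Comp σ
  | ite : Expr σ → Comp σ → Comp σ → Comp σ
  | case : Expr σ → Comp σ → Comp σ → Comp σ
  | absurd : DType σ → Expr σ → Comp σ
  | app : Expr σ → Expr σ → Comp σ
  | letin : Comp σ → Comp σ → Comp σ
  | letrec : PType σ → DType σ → Comp σ → Comp σ → Comp σ
end

/-- Pushing a renaming under one binder. -/
def liftRen (ξ : Nat → Nat) : Nat → Nat
  | 0 => 0
  | n + 1 => ξ n + 1

variable {σ : Sig}

mutual
def renameE (ξ : Nat → Nat) : Expr σ → Expr σ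
  | .var n => .var (ξ n)
  | .tt => .tt
  | .ff => .ff
  | .zero => .zero
  | .succ e => .succ (renameE ξ e)
  | .unit => .unit
  | .fn A c => .fn A (renameC (liftRen ξ) c)
  | .inst ι => .inst ι
  | .handler A cv ocs => .handler A (renameC (liftRen ξ) cv) (renameO ξ ocs)
def renameO (ξ : Nat → Nat) : OpCases σ → OpCases σ
  | .nil C => .nil C
  | .cons e op c ocs =>
      .cons (renameE ξ e) op (renameC (liftRen (liftRen ξ)) c) (renameO ξ ocs)
def renameC (ξ : Nat → Nat) : Comp σ → Comp σ
  | .ret e => .ret (renameE ξ e)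
  | .call e1 op e2 c => .call (renameE ξ e1) op (renameE ξ e2) (renameC (liftRen ξ) c)
  | .handle e c => .handle (renameE ξ e) (renameC ξ c)
  | .ite e c1 c2 => .ite (renameE ξ e) (renameC ξ c1) (renameC ξ c2)
  | .case e c1 c2 => .case (renameE ξ e) (renameC ξ c1) (renameC (liftRen ξ) c2)
  | .absurd C e => .absurd C (renameE ξ e)
  | .app e1 e2 => .app (renameE ξ e1) (renameE ξ e2)
  | .letin c1 c2 => .letin (renameC ξ c1) (renameC (liftRen ξ) c2)
  | .letrec A C c1 c2 =>
      .letrec A C (renameC (liftRen (liftRen ξ)) c1) (renameC (liftRen ξ) c2)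
end

/-- Weakening of an expression by one variable. -/
def shiftE (e : Expr σ) : Expr σ := renameE Nat.succ e

/-- Pushing a substitution under one binder. -/
def liftSub (s : Nat → Expr σ) : Nat → Expr σ
  | 0 => .var 0
  | n + 1 => shiftE (s n)

mutual
def substE (s : Nat → Expr σ) : Expr σ → Expr σ
  | .var n => s n
  | .tt => .tt
  | .ff => .ff
  | .zero => .zero
  | .succ e => .succ (substE s e)
  | .unit => .unit
  | .fn A c => .fn A (substC (liftSub s) c)
  | .inst ι => .inst ι
  | .handler A cv ocs => .handler A (substC (liftSub s) cv) (substO s ocs)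
def substO (s : Nat → Expr σ) : OpCases σ → OpCases σ
  | .nil C => .nil C
  | .cons e op c ocs =>
      .cons (substE s e) op (substC (liftSub (liftSub s)) c) (substO s ocs)
def substC (s : Nat → Expr σ) : Comp σ → Comp σ
  | .ret e => .ret (substE s e)
  | .call e1 op e2 c => .call (substE s e1) op (substE s e2) (substC (liftSub s) c)
  | .handle e c => .handle (substE s e) (substC s c)
  | .ite e c1 c2 => .ite (substE s e) (substC s c1) (substC s c2)
  | .case e c1 c2 => .case (substE s e) (substC s c1) (substC (liftSub s) c2)
  | .absurd C e => .absurd C (substE s e)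
  | .app e1 e2 => .app (substE s e1) (substE s e2)
  | .letin c1 c2 => .letin (substC s c1) (substC (liftSub s) c2)
  | .letrec A C c1 c2 =>
      .letrec A C (substC (liftSub (liftSub s)) c1) (substC (liftSub s) c2)
end

/-- Substituting an expression for the last-bound variable. -/
def sub1 (e : Expr σ) : Nat → Expr σ
  | 0 => e
  | n + 1 => .var n

/-- Substituting for the two last-bound variables (index 1 gets `e1`, index 0 gets `e0`). -/
def sub2 (e1 e0 : Expr σ) : Nat → Expr σ
  | 0 => e0
  | 1 => e1
  | n + 2 => .var n

def subst0E (e : Expr σ) (e' : Expr σ) : Expr σ := substE (sub1 e) e'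
def subst0C (e : Expr σ) (c : Comp σ) : Comp σ := substC (sub1 e) c
def subst2C (e1 e0 : Expr σ) (c : Comp σ) : Comp σ := substC (sub2 e1 e0) c

/-- Swap of the two last-bound variables. -/
def swap01 : Nat → Nat
  | 0 => 1
  | 1 => 0
  | n + 2 => n + 2

/-- The unfolding `fun x ↦ let rec f x = c₁ in c₁` of a recursive definition. -/
def recUnfold (A : PType σ) (C : DType σ) (c1 : Comp σ) : Expr σ :=
  .fn A (.letrec A C (renameC (liftRen (liftRen Nat.succ)) c1) (renameC swap01 c1))

/-- `Dispatch ocs ι op e κ c` means `c = ocs_{ι#op}(e, κ)`: the first operation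
case of `ocs` matching `ι#op` is selected (substituting `e` for the parameter
and `κ` for the continuation) and the call is re-raised, with continuation
`(y. κ y)`, if no case matches. -/
inductive Dispatch : OpCases σ → σ.Inst → σ.Op → Expr σ → Expr σ → Comp σ → Prop
  | nil {C ι op e κ} :
      Dispatch (.nil C) ι op e κ (.call (.inst ι) op e (.app (shiftE κ) (.var 0)))
  | found {ι op c ocs e κ} :
      Dispatch (.cons (.inst ι) op c ocs) ι op e κ (subst2C e κ c)
  | skip {e' op' c ocs ι op e κ c'} :
      (Expr.inst ι ≠ e' ∨ op ≠ op') →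
      Dispatch ocs ι op e κ c' →
      Dispatch (.cons e' op' c ocs) ι op e κ c'

/-- Small-step operational semantics `c ⇝ c'` of core Eff. -/
inductive Step (Ω : OpSig σ) : Comp σ → Comp σ → Prop
  | iteTrue {c1 c2} : Step Ω (.ite .tt c1 c2) c1
  | iteFalse {c1 c2} : Step Ω (.ite .ff c1 c2) c2
  | caseZero {c1 c2} : Step Ω (.case .zero c1 c2) c1
  | caseSucc {e c1 c2} : Step Ω (.case (.succ e) c1 c2) (subst0C e c2)
  | app {A c e} : Step Ω (.app (.fn A c) e) (subst0C e c)
  | letCong {c1 c1' c2} : Step Ω c1 c1' → Step Ω (.letin c1 c2) (.letin c1' c2)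
  | letVal {e c2} : Step Ω (.letin (.ret e) c2) (subst0C e c2)
  | letOp {ι op e c1 c2} :
      Step Ω (.letin (.call (.inst ι) op e c1) c2)
        (.call (.inst ι) op e (.letin c1 (renameC (liftRen Nat.succ) c2)))
  | letrec {A C c1 c2} : Step Ω (.letrec A C c1 c2) (subst0C (recUnfold A C c1) c2)
  | handleCong {h c c'} : Step Ω c c' → Step Ω (.handle h c) (.handle h c')
  | handleVal {A cv ocs e} :
      Step Ω (.handle (.handler A cv ocs) (.ret e)) (subst0C e cv)
  | handleOp {A cv ocs ι op e c c'} :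
      Dispatch ocs ι op e
        (.fn (Ω.res op) (.handle (shiftE (.handler A cv ocs)) c)) c' →
      Step Ω (.handle (.handler A cv ocs) (.call (.inst ι) op e c)) c'

/-- Big-step operational semantics `c ⇓ r` of core Eff; results are `val e`
and operation calls `ι#op e (y.c)`. -/
inductive Big (Ω : OpSig σ) : Comp σ → Comp σ → Prop
  | ret {e} : Big Ω (.ret e) (.ret e)
  | call {ι op e c} : Big Ω (.call (.inst ι) op e c) (.call (.inst ι) op e c)
  | iteTrue {c1 c2 r} : Big Ω c1 r → Big Ω (.ite .tt c1 c2) r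
  | iteFalse {c1 c2 r} : Big Ω c2 r → Big Ω (.ite .ff c1 c2) r
  | caseZero {c1 c2 r} : Big Ω c1 r → Big Ω (.case .zero c1 c2) r
  | caseSucc {e c1 c2 r} : Big Ω (subst0C e c2) r → Big Ω (.case (.succ e) c1 c2) r
  | app {A c e r} : Big Ω (subst0C e c) r → Big Ω (.app (.fn A c) e) r
  | letVal {c1 c2 e r} : Big Ω c1 (.ret e) → Big Ω (subst0C e c2) r →
      Big Ω (.letin c1 c2) r
  | letOp {c1 c2 ι op e c} : Big Ω c1 (.call (.inst ι) op e c) →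
      Big Ω (.letin c1 c2)
        (.call (.inst ι) op e (.letin c (renameC (liftRen Nat.succ) c2)))
  | letrec {A C c1 c2 r} : Big Ω (subst0C (recUnfold A C c1) c2) r →
      Big Ω (.letrec A C c1 c2) r
  | handleVal {A cv ocs c e r} : Big Ω c (.ret e) → Big Ω (subst0C e cv) r →
      Big Ω (.handle (.handler A cv ocs) c) r
  | handleOp {A cv ocs c ι op e c' c'' r} :
      Big Ω c (.call (.inst ι) op e c') →
      Dispatch ocs ι op e
        (.fn (Ω.res op) (.handle (shiftE (.handler A cv ocs)) c')) c'' →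
      Big Ω c'' r →
      Big Ω (.handle (.handler A cv ocs) c) r

/-- `c ⇝* r`: iterated small steps ending in a result. -/
inductive StarStep (Ω : OpSig σ) : Comp σ → Comp σ → Prop
  | ret {e} : StarStep Ω (.ret e) (.ret e)
  | call {ι op e c} : StarStep Ω (.call (.inst ι) op e c) (.call (.inst ι) op e c)
  | step {c c' r} : Step Ω c c' → StarStep Ω c' r → StarStep Ω c r

/- Structural subtyping of pure and dirty types. -/
mutual
inductive SubP (σ : Sig) : PType σ → PType σ → Prop
  | bool : SubP σ .bool .bool
  | nat : SubP σ .nat .nat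
  | unit : SubP σ .unit .unit
  | empty : SubP σ .empty .empty
  | fn {A A' C C'} : SubP σ A' A → SubD σ C C' → SubP σ (.fn A C) (.fn A' C')
  | eff {E R R'} : R ⊆ R' → SubP σ (.eff E R) (.eff E R')
  | hand {C C' D D'} : SubD σ C' C → SubD σ D D' → SubP σ (.hand C D) (.hand C' D')
inductive SubD (σ : Sig) : DType σ → DType σ → Prop
  | bang {A A' Δ Δ'} : SubP σ A A' → Δ ⊆ Δ' → SubD σ (.bang A Δ) (.bang A' Δ')
end

/- The effect system of core Eff: typing of expressions, operation cases
(`Γ ⊢ ocs : C / Δ`) and computations, with subsumption. -/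
mutual
inductive HasTypeE (σ : Sig) (Ω : OpSig σ) [DecidableEq σ.Inst] [DecidableEq σ.Op] :
    List (PType σ) → Expr σ → PType σ → Prop
  | var {Γ n A} : Γ[n]? = some A → HasTypeE σ Ω Γ (.var n) A
  | tt {Γ} : HasTypeE σ Ω Γ .tt .bool
  | ff {Γ} : HasTypeE σ Ω Γ .ff .bool
  | zero {Γ} : HasTypeE σ Ω Γ .zero .nat
  | succ {Γ e} : HasTypeE σ Ω Γ e .nat → HasTypeE σ Ω Γ (.succ e) .nat
  | unit {Γ} : HasTypeE σ Ω Γ .unit .unit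
  | fn {Γ A c C} : HasTypeC σ Ω (A :: Γ) c C → HasTypeE σ Ω Γ (.fn A c) (.fn A C)
  | inst {Γ ι E R} : ι ∈ R → (∀ κ ∈ R, Ω.instOf κ = E) →
      HasTypeE σ Ω Γ (.inst ι) (.eff E R)
  | handler {Γ A cv ocs B Δ Δ' Δ''} :
      HasTypeC σ Ω (A :: Γ) cv (.bang B Δ') →
      HasTypeO σ Ω Γ ocs (.bang B Δ') Δ'' →
      Δ ⊆ Δ'' ∪ Δ' →
      HasTypeE σ Ω Γ (.handler A cv ocs) (.hand (.bang A Δ) (.bang B Δ'))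
  | sub {Γ e A A'} : HasTypeE σ Ω Γ e A → SubP σ A A' → HasTypeE σ Ω Γ e A'
inductive HasTypeO (σ : Sig) (Ω : OpSig σ) [DecidableEq σ.Inst] [DecidableEq σ.Op] :
    List (PType σ) → OpCases σ → DType σ → Finset (σ.Inst × σ.Op) → Prop
  | nil {Γ C} : HasTypeO σ Ω Γ (.nil C) C ∅
  | cons {Γ e op c ocs E R C Δ Δ'} :
      HasTypeE σ Ω Γ e (.eff E R) →
      Ω.opOf op = E →
      HasTypeC σ Ω (.fn (Ω.res op) C :: Ω.par op :: Γ) c C →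
      HasTypeO σ Ω Γ ocs C Δ' →
      (∀ ι, R = {ι} → Δ ⊆ insert (ι, op) Δ') →
      ((¬ ∃ ι, R = {ι}) → Δ ⊆ Δ') →
      HasTypeO σ Ω Γ (.cons e op c ocs) C Δ
inductive HasTypeC (σ : Sig) (Ω : OpSig σ) [DecidableEq σ.Inst] [DecidableEq σ.Op] :
    List (PType σ) → Comp σ → DType σ → Prop
  | ret {Γ e A Δ} : HasTypeE σ Ω Γ e A → HasTypeC σ Ω Γ (.ret e) (.bang A Δ)
  | call {Γ e1 op e2 c E R A Δ} :
      HasTypeE σ Ω Γ e1 (.eff E R) →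
      Ω.opOf op = E →
      HasTypeE σ Ω Γ e2 (Ω.par op) →
      HasTypeC σ Ω (Ω.res op :: Γ) c (.bang A Δ) →
      (∀ ι ∈ R, (ι, op) ∈ Δ) →
      HasTypeC σ Ω Γ (.call e1 op e2 c) (.bang A Δ)
  | handle {Γ e c C D} : HasTypeE σ Ω Γ e (.hand C D) → HasTypeC σ Ω Γ c C →
      HasTypeC σ Ω Γ (.handle e c) D
  | ite {Γ e c1 c2 C} : HasTypeE σ Ω Γ e .bool → HasTypeC σ Ω Γ c1 C →
      HasTypeC σ Ω Γ c2 C → HasTypeC σ Ω Γ (.ite e c1 c2) C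
  | case {Γ e c1 c2 C} : HasTypeE σ Ω Γ e .nat → HasTypeC σ Ω Γ c1 C →
      HasTypeC σ Ω (.nat :: Γ) c2 C → HasTypeC σ Ω Γ (.case e c1 c2) C
  | absurd {Γ e C} : HasTypeE σ Ω Γ e .empty → HasTypeC σ Ω Γ (.absurd C e) C
  | app {Γ e1 e2 A C} : HasTypeE σ Ω Γ e1 (.fn A C) → HasTypeE σ Ω Γ e2 A →
      HasTypeC σ Ω Γ (.app e1 e2) C
  | letin {Γ c1 c2 A B Δ} : HasTypeC σ Ω Γ c1 (.bang A Δ) →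
      HasTypeC σ Ω (A :: Γ) c2 (.bang B Δ) →
      HasTypeC σ Ω Γ (.letin c1 c2) (.bang B Δ)
  | letrec {Γ A C c1 c2 D} :
      HasTypeC σ Ω (A :: .fn A C :: Γ) c1 C →
      HasTypeC σ Ω (.fn A C :: Γ) c2 D →
      HasTypeC σ Ω Γ (.letrec A C c1 c2) D
  | sub {Γ c C C'} : HasTypeC σ Ω Γ c C → SubD σ C C' → HasTypeC σ Ω Γ c C'
end

/-- Skeletal types: pure/dirty types with all effect information erased. -/
inductive SType (σ : Sig) : Type
  | bool : SType σ
  | nat : SType σ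
  | unit : SType σ
  | empty : SType σ
  | fn : SType σ → SType σ → SType σ
  | eff : σ.Effect → SType σ
  | hand : SType σ → SType σ → SType σ

/- Skeletal erasure of pure and dirty types. -/
mutual
def skelP : PType σ → SType σ
  | .bool => .bool
  | .nat => .nat
  | .unit => .unit
  | .empty => .empty
  | .fn A C => .fn (skelP A) (skelD C)
  | .eff E _ => .eff E
  | .hand C D => .hand (skelD C) (skelD D)
def skelD : DType σ → SType σ
  | .bang A _ => skelP A
end

/- The skeletal type system: the rules of core Eff with all effect
information erased and without subsumption. -/
mutual
inductive SHasTypeE (σ : Sig) (Ω : OpSig σ) :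
    List (SType σ) → Expr σ → SType σ → Prop
  | var {Γ n S} : Γ[n]? = some S → SHasTypeE σ Ω Γ (.var n) S
  | tt {Γ} : SHasTypeE σ Ω Γ .tt .bool
  | ff {Γ} : SHasTypeE σ Ω Γ .ff .bool
  | zero {Γ} : SHasTypeE σ Ω Γ .zero .nat
  | succ {Γ e} : SHasTypeE σ Ω Γ e .nat → SHasTypeE σ Ω Γ (.succ e) .nat
  | unit {Γ} : SHasTypeE σ Ω Γ .unit .unit
  | fn {Γ A c T} : SHasTypeC σ Ω (skelP A :: Γ) c T →
      SHasTypeE σ Ω Γ (.fn A c) (.fn (skelP A) T)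
  | inst {Γ ι} : SHasTypeE σ Ω Γ (.inst ι) (.eff (Ω.instOf ι))
  | handler {Γ A cv ocs T} :
      SHasTypeC σ Ω (skelP A :: Γ) cv T →
      SHasTypeO σ Ω Γ ocs T →
      SHasTypeE σ Ω Γ (.handler A cv ocs) (.hand (skelP A) T)
inductive SHasTypeO (σ : Sig) (Ω : OpSig σ) :
    List (SType σ) → OpCases σ → SType σ → Prop
  | nil {Γ C} : SHasTypeO σ Ω Γ (.nil C) (skelD C)
  | cons {Γ e op c ocs T} :
      SHasTypeE σ Ω Γ e (.eff (Ω.opOf op)) →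
      SHasTypeC σ Ω (.fn (skelP (Ω.res op)) T :: skelP (Ω.par op) :: Γ) c T →
      SHasTypeO σ Ω Γ ocs T →
      SHasTypeO σ Ω Γ (.cons e op c ocs) T
inductive SHasTypeC (σ : Sig) (Ω : OpSig σ) :
    List (SType σ) → Comp σ → SType σ → Prop
  | ret {Γ e S} : SHasTypeE σ Ω Γ e S → SHasTypeC σ Ω Γ (.ret e) S
  | call {Γ e1 op e2 c T} :
      SHasTypeE σ Ω Γ e1 (.eff (Ω.opOf op)) →
      SHasTypeE σ Ω Γ e2 (skelP (Ω.par op)) →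
      SHasTypeC σ Ω (skelP (Ω.res op) :: Γ) c T →
      SHasTypeC σ Ω Γ (.call e1 op e2 c) T
  | handle {Γ e c S T} : SHasTypeE σ Ω Γ e (.hand S T) → SHasTypeC σ Ω Γ c S →
      SHasTypeC σ Ω Γ (.handle e c) T
  | ite {Γ e c1 c2 T} : SHasTypeE σ Ω Γ e .bool → SHasTypeC σ Ω Γ c1 T →
      SHasTypeC σ Ω Γ c2 T → SHasTypeC σ Ω Γ (.ite e c1 c2) T
  | case {Γ e c1 c2 T} : SHasTypeE σ Ω Γ e .nat → SHasTypeC σ Ω Γ c1 T →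
      SHasTypeC σ Ω (.nat :: Γ) c2 T → SHasTypeC σ Ω Γ (.case e c1 c2) T
  | absurd {Γ e C} : SHasTypeE σ Ω Γ e .empty → SHasTypeC σ Ω Γ (.absurd C e) (skelD C)
  | app {Γ e1 e2 S T} : SHasTypeE σ Ω Γ e1 (.fn S T) → SHasTypeE σ Ω Γ e2 S →
      SHasTypeC σ Ω Γ (.app e1 e2) T
  | letin {Γ c1 c2 S T} : SHasTypeC σ Ω Γ c1 S → SHasTypeC σ Ω (S :: Γ) c2 T →
      SHasTypeC σ Ω Γ (.letin c1 c2) T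
  | letrec {Γ A C c1 c2 T} :
      SHasTypeC σ Ω (skelP A :: .fn (skelP A) (skelD C) :: Γ) c1 (skelD C) →
      SHasTypeC σ Ω (.fn (skelP A) (skelD C) :: Γ) c2 T →
      SHasTypeC σ Ω Γ (.letrec A C c1 c2) T
end

end CoreEff

/-!
Safety is preservation of typing under `⇝`, iterated along `c ⇝* r`, followed by reading off the
type of the result. Preservation rests on the renaming and substitution lemmas and on inversion
lemmas that push subsumption through each syntactic form. The delicate step is handling a call
`ι#op`: its dirt lies in the dirt `Δ''` of the operation cases or in the outgoing dirt `Δ'`.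
Skipping a case `e'#op'` that does not match keeps `ι#op ∈ Δ'' ∪ Δ'` for the remaining cases,
because a closed expression of a singleton region type `E^{κ}` is the instance `κ` itself. So
dispatch either selects a well-typed case body or re-raises the call with `ι#op ∈ Δ'`.
-/

namespace CoreEff

section

variable {σ : Sig}

mutual
theorem SubP.refl : (A : PType σ) → SubP σ A A
  | .bool => .bool
  | .nat => .nat
  | .unit => .unit
  | .empty => .empty
  | .fn A C => .fn (SubP.refl A) (SubD.refl C)
  | .eff _ _ => .eff le_rfl
  | .hand C D => .hand (SubD.refl C) (SubD.refl D)
theorem SubD.refl : (C : DType σ) → SubD σ C C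
  | .bang A _ => .bang (SubP.refl A) le_rfl
end

mutual
theorem SubP.trans : {A B C : PType σ} → SubP σ A B → SubP σ B C → SubP σ A C
  | _, _, _, .bool, .bool => .bool
  | _, _, _, .nat, .nat => .nat
  | _, _, _, .unit, .unit => .unit
  | _, _, _, .empty, .empty => .empty
  | _, _, _, .fn h₁ h₂, .fn h₁' h₂' => .fn (SubP.trans h₁' h₁) (SubD.trans h₂ h₂')
  | _, _, _, .eff h, .eff h' => .eff (h.trans h')
  | _, _, _, .hand h₁ h₂, .hand h₁' h₂' => .hand (SubD.trans h₁' h₁) (SubD.trans h₂ h₂')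
theorem SubD.trans : {A B C : DType σ} → SubD σ A B → SubD σ B C → SubD σ A C
  | _, _, _, .bang h hΔ, .bang h' hΔ' => .bang (SubP.trans h h') (hΔ.trans hΔ')
end

def WellTypedRen (ξ : Nat → Nat) (Γ Γ' : List (PType σ)) : Prop :=
  ∀ n A, Γ[n]? = some A → Γ'[ξ n]? = some A

namespace WellTypedRen

variable {Γ Γ' : List (PType σ)}

theorem liftRen {ξ : Nat → Nat} (h : WellTypedRen ξ Γ Γ') (A : PType σ) :
    WellTypedRen (liftRen ξ) (A :: Γ) (A :: Γ')
  | 0, _, hB => hB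
  | n + 1, B, hB => h n B hB

theorem succ (A : PType σ) : WellTypedRen Nat.succ Γ (A :: Γ) :=
  fun _ _ h ↦ h

theorem swap01 (A B : PType σ) : WellTypedRen swap01 (A :: B :: Γ) (B :: A :: Γ)
  | 0, _, h => h
  | 1, _, h => h
  | _ + 2, _, h => h

end WellTypedRen

variable {Ω : OpSig σ} [DecidableEq σ.Inst] [DecidableEq σ.Op]

mutual
theorem HasTypeE.rename {Γ Γ' : List (PType σ)} {ξ e A} (hξ : WellTypedRen ξ Γ Γ') :
    HasTypeE σ Ω Γ e A → HasTypeE σ Ω Γ' (renameE ξ e) A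
  | .var h => .var (hξ _ _ h)
  | .tt => .tt
  | .ff => .ff
  | .zero => .zero
  | .succ h => .succ (HasTypeE.rename hξ h)
  | .unit => .unit
  | .fn h => .fn (HasTypeC.rename (hξ.liftRen _) h)
  | .inst hι hR => .inst hι hR
  | .handler hv ho hΔ =>
      .handler (HasTypeC.rename (hξ.liftRen _) hv) (HasTypeO.rename hξ ho) hΔ
  | .sub h hA => .sub (HasTypeE.rename hξ h) hA
theorem HasTypeO.rename {Γ Γ' : List (PType σ)} {ξ ocs C Δ} (hξ : WellTypedRen ξ Γ Γ') :
    HasTypeO σ Ω Γ ocs C Δ → HasTypeO σ Ω Γ' (renameO ξ ocs) C Δ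
  | .nil => .nil
  | .cons he hop hc ho h₁ h₂ =>
      .cons (HasTypeE.rename hξ he) hop (HasTypeC.rename ((hξ.liftRen _).liftRen _) hc)
        (HasTypeO.rename hξ ho) h₁ h₂
theorem HasTypeC.rename {Γ Γ' : List (PType σ)} {ξ c C} (hξ : WellTypedRen ξ Γ Γ') :
    HasTypeC σ Ω Γ c C → HasTypeC σ Ω Γ' (renameC ξ c) C
  | .ret h => .ret (HasTypeE.rename hξ h)
  | .call h₁ hop h₂ hc hR =>
      .call (HasTypeE.rename hξ h₁) hop (HasTypeE.rename hξ h₂)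
        (HasTypeC.rename (hξ.liftRen _) hc) hR
  | .handle h hc => .handle (HasTypeE.rename hξ h) (HasTypeC.rename hξ hc)
  | .ite h h₁ h₂ =>
      .ite (HasTypeE.rename hξ h) (HasTypeC.rename hξ h₁) (HasTypeC.rename hξ h₂)
  | .case h h₁ h₂ =>
      .case (HasTypeE.rename hξ h) (HasTypeC.rename hξ h₁)
        (HasTypeC.rename (hξ.liftRen _) h₂)
  | .absurd h => .absurd (HasTypeE.rename hξ h)
  | .app h₁ h₂ => .app (HasTypeE.rename hξ h₁) (HasTypeE.rename hξ h₂)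
  | .letin h₁ h₂ => .letin (HasTypeC.rename hξ h₁) (HasTypeC.rename (hξ.liftRen _) h₂)
  | .letrec h₁ h₂ =>
      .letrec (HasTypeC.rename ((hξ.liftRen _).liftRen _) h₁)
        (HasTypeC.rename (hξ.liftRen _) h₂)
  | .sub h hC => .sub (HasTypeC.rename hξ h) hC
end

theorem HasTypeE.shift {Γ : List (PType σ)} {e A} (h : HasTypeE σ Ω Γ e A) (B : PType σ) :
    HasTypeE σ Ω (B :: Γ) (shiftE e) A :=
  h.rename (.succ B)

variable (Ω) in
def WellTypedSubst (s : Nat → Expr σ) (Γ Γ' : List (PType σ)) : Prop :=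
  ∀ n A, Γ[n]? = some A → HasTypeE σ Ω Γ' (s n) A

namespace WellTypedSubst

variable {Γ Γ' : List (PType σ)}

theorem liftSub {s : Nat → Expr σ} (h : WellTypedSubst Ω s Γ Γ') (A : PType σ) :
    WellTypedSubst Ω (liftSub s) (A :: Γ) (A :: Γ')
  | 0, _, hB => .var hB
  | n + 1, B, hB => (h n B hB).shift A

theorem sub1 {e A} (h : HasTypeE σ Ω Γ e A) : WellTypedSubst Ω (sub1 e) (A :: Γ) Γ
  | 0, _, hB => by cases hB; exact h
  | _ + 1, _, hB => .var hB

theorem sub2 {e₁ e₀ A₁ A₀} (h₁ : HasTypeE σ Ω Γ e₁ A₁) (h₀ : HasTypeE σ Ω Γ e₀ A₀) :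
    WellTypedSubst Ω (sub2 e₁ e₀) (A₀ :: A₁ :: Γ) Γ
  | 0, _, hB => by cases hB; exact h₀
  | 1, _, hB => by cases hB; exact h₁
  | _ + 2, _, hB => .var hB

end WellTypedSubst

mutual
theorem HasTypeE.subst {Γ Γ' : List (PType σ)} {s e A} (hs : WellTypedSubst Ω s Γ Γ') :
    HasTypeE σ Ω Γ e A → HasTypeE σ Ω Γ' (substE s e) A
  | .var h => hs _ _ h
  | .tt => .tt
  | .ff => .ff
  | .zero => .zero
  | .succ h => .succ (HasTypeE.subst hs h)
  | .unit => .unit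
  | .fn h => .fn (HasTypeC.subst (hs.liftSub _) h)
  | .inst hι hR => .inst hι hR
  | .handler hv ho hΔ =>
      .handler (HasTypeC.subst (hs.liftSub _) hv) (HasTypeO.subst hs ho) hΔ
  | .sub h hA => .sub (HasTypeE.subst hs h) hA
theorem HasTypeO.subst {Γ Γ' : List (PType σ)} {s ocs C Δ} (hs : WellTypedSubst Ω s Γ Γ') :
    HasTypeO σ Ω Γ ocs C Δ → HasTypeO σ Ω Γ' (substO s ocs) C Δ
  | .nil => .nil
  | .cons he hop hc ho h₁ h₂ =>
      .cons (HasTypeE.subst hs he) hop (HasTypeC.subst ((hs.liftSub _).liftSub _) hc)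
        (HasTypeO.subst hs ho) h₁ h₂
theorem HasTypeC.subst {Γ Γ' : List (PType σ)} {s c C} (hs : WellTypedSubst Ω s Γ Γ') :
    HasTypeC σ Ω Γ c C → HasTypeC σ Ω Γ' (substC s c) C
  | .ret h => .ret (HasTypeE.subst hs h)
  | .call h₁ hop h₂ hc hR =>
      .call (HasTypeE.subst hs h₁) hop (HasTypeE.subst hs h₂)
        (HasTypeC.subst (hs.liftSub _) hc) hR
  | .handle h hc => .handle (HasTypeE.subst hs h) (HasTypeC.subst hs hc)
  | .ite h h₁ h₂ =>
      .ite (HasTypeE.subst hs h) (HasTypeC.subst hs h₁) (HasTypeC.subst hs h₂)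
  | .case h h₁ h₂ =>
      .case (HasTypeE.subst hs h) (HasTypeC.subst hs h₁)
        (HasTypeC.subst (hs.liftSub _) h₂)
  | .absurd h => .absurd (HasTypeE.subst hs h)
  | .app h₁ h₂ => .app (HasTypeE.subst hs h₁) (HasTypeE.subst hs h₂)
  | .letin h₁ h₂ => .letin (HasTypeC.subst hs h₁) (HasTypeC.subst (hs.liftSub _) h₂)
  | .letrec h₁ h₂ =>
      .letrec (HasTypeC.subst ((hs.liftSub _).liftSub _) h₁)
        (HasTypeC.subst (hs.liftSub _) h₂)
  | .sub h hC => .sub (HasTypeC.subst hs h) hC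
end

theorem HasTypeC.subst0 {Γ : List (PType σ)} {e A c C} (hc : HasTypeC σ Ω (A :: Γ) c C)
    (he : HasTypeE σ Ω Γ e A) : HasTypeC σ Ω Γ (subst0C e c) C :=
  hc.subst (.sub1 he)

theorem HasTypeC.subst2 {Γ : List (PType σ)} {e₁ e₀ A₁ A₀ c C}
    (hc : HasTypeC σ Ω (A₀ :: A₁ :: Γ) c C) (h₁ : HasTypeE σ Ω Γ e₁ A₁)
    (h₀ : HasTypeE σ Ω Γ e₀ A₀) :
    HasTypeC σ Ω Γ (subst2C e₁ e₀ c) C :=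
  hc.subst (.sub2 h₁ h₀)

namespace HasTypeC

theorem inv_ret {Γ : List (PType σ)} {c C e A Δ} :
    HasTypeC σ Ω Γ c C → c = .ret e → C = .bang A Δ → HasTypeE σ Ω Γ e A
  | .ret h, rfl, rfl => h
  | .sub h (.bang hA _), rfl, rfl => .sub (inv_ret h rfl rfl) hA

theorem inv_call {Γ : List (PType σ)} {c C e₁ op e₂ c' A Δ} :
    HasTypeC σ Ω Γ c C → c = .call e₁ op e₂ c' → C = .bang A Δ →
      ∃ E R, HasTypeE σ Ω Γ e₁ (.eff E R) ∧ Ω.opOf op = E ∧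
        HasTypeE σ Ω Γ e₂ (Ω.par op) ∧ HasTypeC σ Ω (Ω.res op :: Γ) c' (.bang A Δ) ∧
        ∀ ι ∈ R, (ι, op) ∈ Δ
  | .call h₁ hop h₂ hc hR, rfl, rfl => ⟨_, _, h₁, hop, h₂, hc, hR⟩
  | .sub h (.bang hA hΔ), rfl, rfl =>
      let ⟨E, R, h₁, hop, h₂, hc, hR⟩ := inv_call h rfl rfl
      ⟨E, R, h₁, hop, h₂, .sub hc (.bang hA hΔ), fun ι hι ↦ hΔ (hR ι hι)⟩

theorem inv_handle {Γ : List (PType σ)} {c C e c'} :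
    HasTypeC σ Ω Γ c C → c = .handle e c' →
      ∃ C', HasTypeE σ Ω Γ e (.hand C' C) ∧ HasTypeC σ Ω Γ c' C'
  | .handle h hc, rfl => ⟨_, h, hc⟩
  | .sub h hC, rfl =>
      let ⟨C', h, hc⟩ := inv_handle h rfl
      ⟨C', .sub h (.hand (.refl _) hC), hc⟩

theorem inv_ite {Γ : List (PType σ)} {c C e c₁ c₂} :
    HasTypeC σ Ω Γ c C → c = .ite e c₁ c₂ →
      HasTypeE σ Ω Γ e .bool ∧ HasTypeC σ Ω Γ c₁ C ∧ HasTypeC σ Ω Γ c₂ C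
  | .ite h h₁ h₂, rfl => ⟨h, h₁, h₂⟩
  | .sub h hC, rfl =>
      let ⟨h, h₁, h₂⟩ := inv_ite h rfl
      ⟨h, .sub h₁ hC, .sub h₂ hC⟩

theorem inv_case {Γ : List (PType σ)} {c C e c₁ c₂} :
    HasTypeC σ Ω Γ c C → c = .case e c₁ c₂ →
      HasTypeE σ Ω Γ e .nat ∧ HasTypeC σ Ω Γ c₁ C ∧ HasTypeC σ Ω (.nat :: Γ) c₂ C
  | .case h h₁ h₂, rfl => ⟨h, h₁, h₂⟩
  | .sub h hC, rfl =>
      let ⟨h, h₁, h₂⟩ := inv_case h rfl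
      ⟨h, .sub h₁ hC, .sub h₂ hC⟩

theorem inv_app {Γ : List (PType σ)} {c C e₁ e₂} :
    HasTypeC σ Ω Γ c C → c = .app e₁ e₂ →
      ∃ A, HasTypeE σ Ω Γ e₁ (.fn A C) ∧ HasTypeE σ Ω Γ e₂ A
  | .app h₁ h₂, rfl => ⟨_, h₁, h₂⟩
  | .sub h hC, rfl =>
      let ⟨A, h₁, h₂⟩ := inv_app h rfl
      ⟨A, .sub h₁ (.fn (.refl _) hC), h₂⟩

theorem inv_letin {Γ : List (PType σ)} {c C c₁ c₂ B Δ} :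
    HasTypeC σ Ω Γ c C → c = .letin c₁ c₂ → C = .bang B Δ →
      ∃ A, HasTypeC σ Ω Γ c₁ (.bang A Δ) ∧ HasTypeC σ Ω (A :: Γ) c₂ (.bang B Δ)
  | .letin h₁ h₂, rfl, rfl => ⟨_, h₁, h₂⟩
  | .sub h (.bang hB hΔ), rfl, rfl =>
      let ⟨A, h₁, h₂⟩ := inv_letin h rfl rfl
      ⟨A, .sub h₁ (.bang (.refl _) hΔ), .sub h₂ (.bang hB hΔ)⟩

theorem inv_letrec {Γ : List (PType σ)} {c D A C c₁ c₂} :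
    HasTypeC σ Ω Γ c D → c = .letrec A C c₁ c₂ →
      HasTypeC σ Ω (A :: .fn A C :: Γ) c₁ C ∧ HasTypeC σ Ω (.fn A C :: Γ) c₂ D
  | .letrec h₁ h₂, rfl => ⟨h₁, h₂⟩
  | .sub h hD, rfl =>
      let ⟨h₁, h₂⟩ := inv_letrec h rfl
      ⟨h₁, .sub h₂ hD⟩

end HasTypeC

namespace HasTypeE

theorem inv_succ {Γ : List (PType σ)} {e A e'} :
    HasTypeE σ Ω Γ e A → e = .succ e' → A = .nat → HasTypeE σ Ω Γ e' .nat
  | .succ h, rfl, rfl => h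
  | .sub h .nat, rfl, rfl => inv_succ h rfl rfl

theorem inv_fn {Γ : List (PType σ)} {e T A₀ c A C} :
    HasTypeE σ Ω Γ e T → e = .fn A₀ c → T = .fn A C →
      SubP σ A A₀ ∧ HasTypeC σ Ω (A₀ :: Γ) c C
  | .fn h, rfl, rfl => ⟨.refl _, h⟩
  | .sub h (.fn hA hC), rfl, rfl =>
      let ⟨hA₀, h⟩ := inv_fn h rfl rfl
      ⟨hA.trans hA₀, .sub h hC⟩

theorem inv_handler {Γ : List (PType σ)} {e T A cv ocs A₁ Δ₁ D} :
    HasTypeE σ Ω Γ e T → e = .handler A cv ocs → T = .hand (.bang A₁ Δ₁) D →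
      SubP σ A₁ A ∧ ∃ B Δ' Δ'', HasTypeC σ Ω (A :: Γ) cv (.bang B Δ') ∧
        HasTypeO σ Ω Γ ocs (.bang B Δ') Δ'' ∧ Δ₁ ⊆ Δ'' ∪ Δ' ∧ SubD σ (.bang B Δ') D
  | .handler hv ho hΔ, rfl, rfl => ⟨.refl _, _, _, _, hv, ho, hΔ, .refl _⟩
  | .sub h (.hand (.bang hA hΔ₁) hD), rfl, rfl =>
      let ⟨hA', B, Δ', Δ'', hv, ho, hΔ, hD'⟩ := inv_handler h rfl rfl
      ⟨hA.trans hA', B, Δ', Δ'', hv, ho, hΔ₁.trans hΔ, hD'.trans hD⟩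

theorem inv_inst {Γ : List (PType σ)} {e T ι E R} :
    HasTypeE σ Ω Γ e T → e = .inst ι → T = .eff E R → ι ∈ R ∧ Ω.instOf ι = E
  | .inst hι hR, rfl, rfl => ⟨hι, hR ι hι⟩
  | .sub h (.eff hR), rfl, rfl =>
      let ⟨hι, hE⟩ := inv_inst h rfl rfl
      ⟨hR hι, hE⟩

theorem exists_eq_inst {Γ : List (PType σ)} {e T E R} :
    HasTypeE σ Ω Γ e T → Γ = [] → T = .eff E R → ∃ ι ∈ R, e = .inst ι
  | .inst hι _, _, rfl => ⟨_, hι, rfl⟩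
  | .sub h (.eff hR), hΓ, rfl =>
      let ⟨ι, hι, he⟩ := exists_eq_inst h hΓ rfl
      ⟨ι, hR hι, he⟩

end HasTypeE

theorem HasTypeE.recUnfold {Γ : List (PType σ)} {A C c₁}
    (h : HasTypeC σ Ω (A :: .fn A C :: Γ) c₁ C) : HasTypeE σ Ω Γ (recUnfold A C c₁) (.fn A C) :=
  .fn (.letrec (h.rename (((WellTypedRen.succ _).liftRen _).liftRen _)) (h.rename (.swap01 _ _)))

theorem mem_of_mem_of_not_matches {e' : Expr σ} {op op' : σ.Op} {ι : σ.Inst} {E R}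
    {Δ Δ' : Finset (σ.Inst × σ.Op)} (he' : HasTypeE σ Ω [] e' (.eff E R))
    (hsingle : ∀ κ, R = {κ} → Δ ⊆ insert (κ, op') Δ') (hmulti : (¬ ∃ κ, R = {κ}) → Δ ⊆ Δ')
    (hne : Expr.inst ι ≠ e' ∨ op ≠ op') (h : (ι, op) ∈ Δ) : (ι, op) ∈ Δ' := by
  by_cases hR : ∃ κ, R = {κ}
  · obtain ⟨κ, rfl⟩ := hR
    rcases Finset.mem_insert.1 (hsingle κ rfl h) with heq | h'
    · obtain ⟨_, hκ, rfl⟩ := he'.exists_eq_inst rfl rfl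
      obtain ⟨rfl, rfl⟩ := Prod.mk.inj heq
      simp [Finset.mem_singleton.1 hκ] at hne
    · exact h'
  · exact hmulti hR h

theorem Dispatch.hasTypeC {ocs : OpCases σ} {ι op e κ c} (hd : Dispatch ocs ι op e κ c)
    {B Δ' Δ''} (hocs : HasTypeO σ Ω [] ocs (.bang B Δ') Δ'') (hmem : (ι, op) ∈ Δ'' ∪ Δ')
    (hι : Ω.instOf ι = Ω.opOf op) (he : HasTypeE σ Ω [] e (Ω.par op))
    (hκ : HasTypeE σ Ω [] κ (.fn (Ω.res op) (.bang B Δ'))) :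
    HasTypeC σ Ω [] c (.bang B Δ') := by
  induction hd generalizing Δ'' with
  | nil =>
    cases hocs
    refine .call (.inst (Finset.mem_singleton_self _) fun _ h ↦ Finset.mem_singleton.1 h ▸ hι)
      rfl he (.app (hκ.shift _) (.var rfl)) ?_
    simpa using hmem
  | found =>
    cases hocs with
    | cons _ _ hc _ _ _ => exact hc.subst2 he hκ
  | skip hne _ ih =>
    cases hocs with
    | cons he' _ _ hocs hsingle hmulti =>
      refine ih hocs ?_ hι he hκ
      rcases Finset.mem_union.1 hmem with h | h
      · exact Finset.mem_union_left _ (mem_of_mem_of_not_matches he' hsingle hmulti hne h)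
      · exact Finset.mem_union_right _ h

theorem Step.preservation {c c' : Comp σ} (hs : Step Ω c c') {C : DType σ}
    (h : HasTypeC σ Ω [] c C) : HasTypeC σ Ω [] c' C := by
  induction hs generalizing C with
  | iteTrue => exact (h.inv_ite rfl).2.1
  | iteFalse => exact (h.inv_ite rfl).2.2
  | caseZero => exact (h.inv_case rfl).2.1
  | caseSucc =>
    obtain ⟨he, -, hc⟩ := h.inv_case rfl
    exact hc.subst0 (he.inv_succ rfl rfl)
  | app =>
    obtain ⟨A, hf, he⟩ := h.inv_app rfl
    obtain ⟨hA, hc⟩ := hf.inv_fn rfl rfl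
    exact hc.subst0 (.sub he hA)
  | letCong _ ih =>
    obtain ⟨B, Δ⟩ := C
    obtain ⟨A, h₁, h₂⟩ := h.inv_letin rfl rfl
    exact .letin (ih h₁) h₂
  | letVal =>
    obtain ⟨B, Δ⟩ := C
    obtain ⟨A, h₁, h₂⟩ := h.inv_letin rfl rfl
    exact h₂.subst0 (h₁.inv_ret rfl rfl)
  | letOp =>
    obtain ⟨B, Δ⟩ := C
    obtain ⟨A, h₁, h₂⟩ := h.inv_letin rfl rfl
    obtain ⟨E, R, hι, hop, he, hc, hR⟩ := h₁.inv_call rfl rfl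
    exact .call hι hop he (.letin hc (h₂.rename ((WellTypedRen.succ _).liftRen _))) hR
  | letrec =>
    obtain ⟨h₁, h₂⟩ := h.inv_letrec rfl
    exact h₂.subst0 (.recUnfold h₁)
  | handleCong _ ih =>
    obtain ⟨C', hh, hc⟩ := h.inv_handle rfl
    exact .handle hh (ih hc)
  | handleVal =>
    obtain ⟨⟨A₁, Δ₁⟩, hh, hc⟩ := h.inv_handle rfl
    obtain ⟨B₂, Δ₂⟩ := C
    obtain ⟨hA, B, Δ', Δ'', hv, -, -, hD⟩ := hh.inv_handler rfl rfl
    exact .sub (hv.subst0 (.sub (hc.inv_ret rfl rfl) hA)) hD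
  | handleOp hd =>
    obtain ⟨⟨A₁, Δ₁⟩, hh, hc⟩ := h.inv_handle rfl
    obtain ⟨B₂, Δ₂⟩ := C
    obtain ⟨hA, B, Δ', Δ'', hv, hocs, hΔ, hD⟩ := hh.inv_handler rfl rfl
    obtain ⟨E, R, hinst, hop, he, hk, hR⟩ := hc.inv_call rfl rfl
    obtain ⟨hιR, rfl⟩ := hinst.inv_inst rfl rfl
    have hh' : HasTypeE σ Ω [] _ (.hand (.bang A₁ Δ₁) (.bang B Δ')) :=
      .sub (.handler hv hocs hΔ) (.hand (.bang hA le_rfl) (.refl _))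
    exact .sub (hd.hasTypeC hocs (hΔ (hR _ hιR)) hop.symm he (.fn (.handle (hh'.shift _) hk))) hD

end

/-- **Safety.** If `⊢ c : A ! Δ` is derivable for a closed
computation `c` and `c ⇝* r`, then either `r = val e` with `⊢ e : A`, or
`r = ι#op e (x.c')` with `ι#op ∈ Δ`. -/
theorem safety {σ : Sig} (Ω : OpSig σ) [DecidableEq σ.Inst] [DecidableEq σ.Op]
    (c r : Comp σ) (A : PType σ) (Δ : Finset (σ.Inst × σ.Op))
    (h : HasTypeC σ Ω [] c (.bang A Δ)) (hr : StarStep Ω c r) :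
    (∃ e, r = .ret e ∧ HasTypeE σ Ω [] e A) ∨
    (∃ ι op e c', r = .call (.inst ι) op e c' ∧ (ι, op) ∈ Δ) := by
  induction hr with
  | ret => exact .inl ⟨_, rfl, h.inv_ret rfl rfl⟩
  | call =>
    obtain ⟨E, R, hι, -, -, -, hR⟩ := h.inv_call rfl rfl
    exact .inr ⟨_, _, _, _, rfl, hR _ (hι.inv_inst rfl rfl).1⟩
  | step hs _ ih => exact ih (hs.preservation h)

end CoreEff
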